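/- arXiv:1510.05305 — 2 statements merged into one kernel-verified Lean document; each statement's English description precedes it below -/
import Mathlib

section
/- Let n sites each carry the Hilbert space ℂ^d, let E be an arbitrary set of (unordered) pairs of distinct sites, and let H_P = Σ_{(j,k)∈E} P_{j,k} be the sum of the corresponding permutation operators. Fix a site m and a single-site Lindblad generator 𝓛_m on ℂ^d specified by a local Hamiltonian h and Lindblad operators {l_j}. Let ρ* be a density matrix on ℂ^d with 𝓛_m(ρ*) = 0. Then the product state ρ∞ = ρ*^{⊗n} is a steady state of the full Lindblad generator 𝓛 on (ℂ^d)^{⊗n} whose Hamiltonian is H_P plus h embedded at site m and whose Lindblad operators are the l_j embedded at site m: 𝓛(ρ∞) = 0. -/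
/-!
Write `ρ*^{⊗n}` as the tensor product of the constant family `ρ*`. The tensor product of a
family is multiplicative and multilinear in its factors, and an operator embedded at site `m` is
the tensor product of identities with that operator in slot `m`; hence multiplying `ρ*^{⊗n}` by
embedded operators only changes its `m`-th factor, and every local term of `𝓛(ρ*^{⊗n})` is the
image of the corresponding term of `𝓛_m(ρ*)` under the linear map inserting a one-site operator
into slot `m`. The swap operators commute with the permutation-invariant state `ρ*^{⊗n}`, so
`H_P` drops out of the commutator, and `𝓛(ρ*^{⊗n})` is the image of `𝓛_m(ρ*) = 0`.
-/

open Matrix Finset ComplexOrder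

noncomputable section

/-- The Lindblad generator associated to a Hamiltonian `H` and Lindblad operators `L k`:
`𝓛(ρ) = i(ρH − Hρ) + Σ_k (2 L_k ρ L_k† − ρ L_k† L_k − L_k† L_k ρ)`. -/
def lindblad {ι : Type*} [Fintype ι] [DecidableEq ι] {K : ℕ}
    (H : Matrix ι ι ℂ) (L : Fin K → Matrix ι ι ℂ) (ρ : Matrix ι ι ℂ) : Matrix ι ι ℂ :=
  Complex.I • (ρ * H - H * ρ) +
    ∑ k : Fin K, ((2 : ℂ) • (L k * ρ * (L k)ᴴ) - ρ * ((L k)ᴴ * L k) - ((L k)ᴴ * L k) * ρ)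

/-- A density matrix: positive semidefinite with trace 1. -/
def IsDensityMatrix {ι : Type*} [Fintype ι] [DecidableEq ι] (ρ : Matrix ι ι ℂ) : Prop :=
  ρ.PosSemidef ∧ ρ.trace = 1

/-- Embedding of a single-site operator `A` at site `m` of an `n`-site lattice
(each site of dimension `d`): it acts as `A` on factor `m` and as identity elsewhere. -/
def embed {n d : ℕ} (m : Fin n) (A : Matrix (Fin d) (Fin d) ℂ) :
    Matrix (Fin n → Fin d) (Fin n → Fin d) ℂ :=
  fun x y => A (x m) (y m) * ∏ i ∈ Finset.univ.erase m, (if x i = y i then (1 : ℂ) else 0)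

/-- The permutation (swap) operator `P_{j,k}` exchanging tensor factors `j` and `k`. -/
def swapOp {n d : ℕ} (j k : Fin n) : Matrix (Fin n → Fin d) (Fin n → Fin d) ℂ :=
  fun x y => if x = y ∘ (Equiv.swap j k) then 1 else 0

/-- The `n`-fold tensor power `ρ^{⊗n}` of a one-site matrix `ρ`. -/
def prodState (n : ℕ) {d : ℕ} (ρ : Matrix (Fin d) (Fin d) ℂ) :
    Matrix (Fin n → Fin d) (Fin n → Fin d) ℂ :=
  fun x y => ∏ i, ρ (x i) (y i)

/-- The tensor product `A 0 ⊗ A 1 ⊗ ⋯ ⊗ A (n-1)` of a family of one-site matrices. -/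
def tensorFam {n d : ℕ} (A : Fin n → Matrix (Fin d) (Fin d) ℂ) :
    Matrix (Fin n → Fin d) (Fin n → Fin d) ℂ :=
  fun x y => ∏ i, A i (x i) (y i)

/-- Partial trace over all sites except site `m`: the reduced state at site `m`. -/
def ptraceAt {n d : ℕ} (m : Fin n) (ρ : Matrix (Fin n → Fin d) (Fin n → Fin d) ℂ) :
    Matrix (Fin d) (Fin d) ℂ :=
  fun a b => ∑ g : Fin n → Fin d, if g m = a then ρ g (Function.update g m b) else 0

def σx : Matrix (Fin 2) (Fin 2) ℂ := !![0, 1; 1, 0]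
def σy : Matrix (Fin 2) (Fin 2) ℂ := !![0, -Complex.I; Complex.I, 0]
def σz : Matrix (Fin 2) (Fin 2) ℂ := !![1, 0; 0, -1]

/-- Embedding of an operator on the subsystem `A` of the first `n` sites into `n+1` sites. -/
def embedA {n d : ℕ} (B : Matrix (Fin n → Fin d) (Fin n → Fin d) ℂ) :
    Matrix (Fin (n+1) → Fin d) (Fin (n+1) → Fin d) ℂ :=
  fun x y => B (x ∘ Fin.castSucc) (y ∘ Fin.castSucc) *
    (if x (Fin.last n) = y (Fin.last n) then (1 : ℂ) else 0)

namespace tensorFam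

variable {n d : ℕ}

theorem mul (A B : Fin n → Matrix (Fin d) (Fin d) ℂ) :
    tensorFam A * tensorFam B = tensorFam (A * B) := by
  ext x y
  simp only [tensorFam, Matrix.mul_apply, Pi.mul_apply, Fintype.prod_sum, Finset.prod_mul_distrib]

theorem conjTranspose (A : Fin n → Matrix (Fin d) (Fin d) ℂ) :
    (tensorFam A)ᴴ = tensorFam (fun i => (A i)ᴴ) := by
  ext x y
  simp only [tensorFam, Matrix.conjTranspose_apply, star_prod]

theorem update_apply [DecidableEq (Fin n)] (B : Fin n → Matrix (Fin d) (Fin d) ℂ) (m : Fin n)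
    (A : Matrix (Fin d) (Fin d) ℂ) (x y : Fin n → Fin d) :
    tensorFam (Function.update B m A) x y
      = A (x m) (y m) * ∏ i ∈ univ.erase m, B i (x i) (y i) := by
  rw [tensorFam, ← mul_prod_erase univ _ (mem_univ m), Function.update_self]
  congr 1
  exact prod_congr rfl fun i hi => by rw [Function.update_of_ne (ne_of_mem_erase hi)]

end tensorFam

def tensorFamMultilinear (n d : ℕ) :
    MultilinearMap ℂ (fun _ : Fin n => Matrix (Fin d) (Fin d) ℂ)
      (Matrix (Fin n → Fin d) (Fin n → Fin d) ℂ) where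
  toFun := tensorFam
  map_update_add' B m X Y := by
    ext x y
    simp only [tensorFam.update_apply, Matrix.add_apply, add_mul]
  map_update_smul' B m c X := by
    ext x y
    simp only [tensorFam.update_apply, Matrix.smul_apply, smul_eq_mul, mul_assoc]

section SiteOperators

variable {n d : ℕ}

theorem embed_eq_tensorFam (m : Fin n) (A : Matrix (Fin d) (Fin d) ℂ) :
    embed m A = tensorFam (Function.update 1 m A) := by
  ext x y
  simp only [embed, tensorFam.update_apply, Pi.one_apply, Matrix.one_apply]

theorem embed_conjTranspose (m : Fin n) (A : Matrix (Fin d) (Fin d) ℂ) :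
    (embed m A)ᴴ = embed m Aᴴ := by
  rw [embed_eq_tensorFam, tensorFam.conjTranspose, embed_eq_tensorFam]
  congr 1
  funext i
  rcases eq_or_ne i m with rfl | hi
  · simp only [Function.update_self]
  · simp only [Function.update_of_ne hi, Pi.one_apply, conjTranspose_one]

theorem embed_mul_tensorFam_update (m : Fin n) (A X : Matrix (Fin d) (Fin d) ℂ)
    (B : Fin n → Matrix (Fin d) (Fin d) ℂ) :
    embed m A * tensorFam (Function.update B m X) = tensorFam (Function.update B m (A * X)) := by
  rw [embed_eq_tensorFam, tensorFam.mul, ← Function.update_mul, one_mul]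

theorem tensorFam_update_mul_embed (m : Fin n) (A X : Matrix (Fin d) (Fin d) ℂ)
    (B : Fin n → Matrix (Fin d) (Fin d) ℂ) :
    tensorFam (Function.update B m X) * embed m A = tensorFam (Function.update B m (X * A)) := by
  rw [embed_eq_tensorFam, tensorFam.mul, ← Function.update_mul, mul_one]

theorem swapOp_mul_apply (j k : Fin n) (M : Matrix (Fin n → Fin d) (Fin n → Fin d) ℂ)
    (x y : Fin n → Fin d) : (swapOp j k * M : Matrix _ _ ℂ) x y = M (x ∘ Equiv.swap j k) y := by
  have hx : ∀ z : Fin n → Fin d, x = z ∘ Equiv.swap j k ↔ x ∘ Equiv.swap j k = z := by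
    intro z
    rw [← (Equiv.swap j k).comp_symm_eq, Equiv.symm_swap, eq_comm]
  simp only [Matrix.mul_apply, swapOp, hx, ite_mul, one_mul, zero_mul, sum_ite_eq, mem_univ,
    if_true]

theorem mul_swapOp_apply (j k : Fin n) (M : Matrix (Fin n → Fin d) (Fin n → Fin d) ℂ)
    (x y : Fin n → Fin d) : (M * swapOp j k : Matrix _ _ ℂ) x y = M x (y ∘ Equiv.swap j k) := by
  simp only [Matrix.mul_apply, swapOp, mul_ite, mul_one, mul_zero, sum_ite_eq', mem_univ,
    if_true]

theorem prodState_comp_perm (ρ : Matrix (Fin d) (Fin d) ℂ) (σ : Equiv.Perm (Fin n))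
    (x y : Fin n → Fin d) : prodState n ρ (x ∘ σ) (y ∘ σ) = prodState n ρ x y :=
  Fintype.prod_equiv σ _ _ fun _ => rfl

theorem commute_swapOp_prodState (j k : Fin n) (ρ : Matrix (Fin d) (Fin d) ℂ) :
    Commute (swapOp j k) (prodState n ρ) := by
  ext x y
  rw [swapOp_mul_apply, mul_swapOp_apply, ← prodState_comp_perm ρ (Equiv.swap j k)]
  simp only [Function.comp_def, Equiv.swap_apply_self]

theorem lindblad_add_embed_tensorFam {K : ℕ} (m : Fin n)
    (S : Matrix (Fin n → Fin d) (Fin n → Fin d) ℂ) (H : Matrix (Fin d) (Fin d) ℂ)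
    (L : Fin K → Matrix (Fin d) (Fin d) ℂ) (C : Fin n → Matrix (Fin d) (Fin d) ℂ)
    (hS : Commute S (tensorFam C)) :
    lindblad (S + embed m H) (fun k => embed m (L k)) (tensorFam C)
      = (tensorFamMultilinear n d).toLinearMap C m (lindblad H L (C m)) := by
  set T := (tensorFamMultilinear n d).toLinearMap C m
  have hC : tensorFam C = T (C m) := congrArg tensorFam (Function.update_eq_self m C).symm
  have hleft : ∀ A X, embed m A * T X = T (A * X) := fun A X => embed_mul_tensorFam_update m A X C
  have hright : ∀ A X, T X * embed m A = T (X * A) := fun A X => tensorFam_update_mul_embed m A X C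
  rw [lindblad, lindblad, mul_add, add_mul, hS.eq, add_sub_add_left_eq_sub]
  simp only [embed_conjTranspose, hC, hleft, hright, ← mul_assoc, map_add, map_sub, map_smul,
    map_sum]
  simp only [mul_assoc (embed m _), hleft, ← mul_assoc]

end SiteOperators

theorem product_state_is_steady_state_general
    (n d K : ℕ) (E : Finset (Fin n × Fin n))
    (m : Fin n) (h : Matrix (Fin d) (Fin d) ℂ)
    (l : Fin K → Matrix (Fin d) (Fin d) ℂ)
    (ρstar : Matrix (Fin d) (Fin d) ℂ)
    (hss : lindblad h l ρstar = 0) :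
    lindblad ((∑ p ∈ E, swapOp p.1 p.2) + embed m h) (fun j => embed m (l j))
      (prodState n ρstar) = 0 := by
  have hcomm : Commute (∑ p ∈ E, swapOp p.1 p.2) (prodState n ρstar) :=
    Commute.sum_left _ _ _ fun p _ => commute_swapOp_prodState p.1 p.2 ρstar
  have hlocal := lindblad_add_embed_tensorFam m _ h l (fun _ => ρstar) hcomm
  rwa [hss, map_zero] at hlocal

/-- For a permutation Hamiltonian `H_P = Σ_{(j,k)∈E} P_{j,k}` over an arbitrary
set `E` of pairs of distinct sites, together with a single-site Lindblad generator (Hamiltonian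
`h`, Lindblad operators `l j`) embedded at site `m`, any one-site steady density matrix `ρ*` of
the local generator gives rise to the product steady state `ρ*^{⊗n}` of the full generator. -/
theorem product_state_is_steady_state
    (n d K : ℕ) (E : Finset (Fin n × Fin n)) (hE : ∀ p ∈ E, p.1 ≠ p.2)
    (m : Fin n) (h : Matrix (Fin d) (Fin d) ℂ) (hherm : h.IsHermitian)
    (l : Fin K → Matrix (Fin d) (Fin d) ℂ)
    (ρstar : Matrix (Fin d) (Fin d) ℂ) (hρ : IsDensityMatrix ρstar)
    (hss : lindblad h l ρstar = 0) :
    lindblad ((∑ p ∈ E, swapOp p.1 p.2) + embed m h) (fun j => embed m (l j))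
      (prodState n ρstar) = 0 :=
  product_state_is_steady_state_general n d K E m h l ρstar hss
end
end

section
/- Let H_P = Σ_{s=1}^{n−1} P_{s,s+1} be the chain permutation Hamiltonian on (ℂ^d)^{⊗n}, and let E_{ab}^{(r)} denote the matrix unit |a⟩⟨b| embedded at site r (identity elsewhere). Then for every site r and all indices j, k ∈ {1, …, d} with k ≠ j, Σ_{i=1}^{d} E_{ij}^{(r)} H_P E_{ki}^{(r)} = E_{kj}^{(r+1)} + E_{kj}^{(r−1)}, where the term E_{kj}^{(r−1)} is omitted when r = 1 and the term E_{kj}^{(r+1)} is omitted when r = n. -/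
open Matrix Finset ComplexOrder

noncomputable section

/-! Conjugating by the matrix units at site `r` and summing over the intermediate index
evaluates an operator between configurations rewritten at site `r`: the entry at `(x, y)`
becomes that of `(x[r ↦ j], y[r ↦ k])`, provided `x r = y r`. A swap `P_{r,r'}` then moves the
rewrite to site `r'`, giving `E_{kj}^{(r')}`, whereas a swap not touching `r` leaves the entries
`j ≠ k` at site `r` unmatched and contributes `0`. -/

section MatrixUnits

variable {N d : ℕ}

lemma embed_single_apply (m : Fin N) (a b : Fin d) (x y : Fin N → Fin d) :
    embed m (single a b (1 : ℂ)) x y =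
      if x m = a ∧ y m = b ∧ ∀ t, t ≠ m → x t = y t then 1 else 0 := by
  rw [embed, Finset.prod_boole]
  simp only [single, of_apply, Finset.mem_erase, Finset.mem_univ, and_true]
  by_cases h1 : x m = a <;> by_cases h2 : y m = b <;>
    by_cases h3 : ∀ t, t ≠ m → x t = y t <;> simp_all [eq_comm]

lemma embed_single_apply_eq_zero_of_ne {m r : Fin N} (hm : m ≠ r) (a b : Fin d)
    {x y : Fin N → Fin d} (hxy : x r ≠ y r) : embed m (single a b (1 : ℂ)) x y = 0 := by
  rw [embed_single_apply, if_neg]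
  rintro ⟨-, -, h⟩
  exact hxy (h r hm.symm)

lemma embed_single_mul_apply (m : Fin N) (a b : Fin d)
    (M : Matrix (Fin N → Fin d) (Fin N → Fin d) ℂ) (x y : Fin N → Fin d) :
    (embed m (single a b (1 : ℂ)) * M) x y =
      if x m = a then M (Function.update x m b) y else 0 := by
  rw [mul_apply, Finset.sum_eq_single (Function.update x m b)]
  · rw [embed_single_apply]
    split_ifs with h₁ h₂ h₂
    · rw [one_mul]
    · exact absurd h₁.1 h₂
    · exact absurd ⟨h₂, by simp, fun t ht => (Function.update_of_ne ht _ _).symm⟩ h₁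
    · rw [zero_mul]
  · intro u _ hu
    rw [embed_single_apply, if_neg, zero_mul]
    rintro ⟨-, hu_m, hu_ne⟩
    refine hu (funext fun t => ?_)
    rcases eq_or_ne t m with rfl | ht
    · simp [hu_m]
    · rw [Function.update_of_ne ht]; exact (hu_ne t ht).symm
  · simp

lemma mul_embed_single_apply (m : Fin N) (a b : Fin d)
    (M : Matrix (Fin N → Fin d) (Fin N → Fin d) ℂ) (x y : Fin N → Fin d) :
    (M * embed m (single a b (1 : ℂ))) x y =
      if y m = b then M x (Function.update y m a) else 0 := by
  rw [mul_apply, Finset.sum_eq_single (Function.update y m a)]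
  · rw [embed_single_apply]
    split_ifs with h₁ h₂ h₂
    · rw [mul_one]
    · exact absurd h₁.2.1 h₂
    · exact absurd ⟨by simp, h₂, fun t ht => Function.update_of_ne ht _ _⟩ h₁
    · rw [mul_zero]
  · intro u _ hu
    rw [embed_single_apply, if_neg, mul_zero]
    rintro ⟨hu_m, -, hu_ne⟩
    refine hu (funext fun t => ?_)
    rcases eq_or_ne t m with rfl | ht
    · simp [hu_m]
    · rw [Function.update_of_ne ht]; exact hu_ne t ht
  · simp

lemma sum_embed_single_mul_mul_embed_single_apply (r : Fin N) (j k : Fin d)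
    (M : Matrix (Fin N → Fin d) (Fin N → Fin d) ℂ) (x y : Fin N → Fin d) :
    (∑ i : Fin d, embed r (single i j (1 : ℂ)) * M * embed r (single k i 1)) x y =
      if x r = y r then M (Function.update x r j) (Function.update y r k) else 0 := by
  simp only [Matrix.sum_apply, Matrix.mul_assoc, embed_single_mul_apply,
    mul_embed_single_apply]
  rw [Finset.sum_ite_eq, if_pos (Finset.mem_univ _)]
  exact if_congr eq_comm rfl rfl

lemma swapOp_comm (a b : Fin N) : (swapOp a b : Matrix (Fin N → Fin d) _ ℂ) = swapOp b a := by
  unfold swapOp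
  rw [Equiv.swap_comm]

lemma swapOp_update_apply_of_ne {r r' : Fin N} (hr : r' ≠ r) (j k : Fin d)
    {x y : Fin N → Fin d} (hxy : x r = y r) :
    swapOp r r' (Function.update x r j) (Function.update y r k) =
      embed r' (single k j (1 : ℂ)) x y := by
  rw [swapOp, embed_single_apply]
  refine if_congr ?_ rfl rfl
  rw [funext_iff]
  constructor
  · intro h
    refine ⟨?_, ?_, fun t ht => ?_⟩
    · simpa [Function.update_of_ne hr] using h r'
    · simpa [Function.update_of_ne hr, eq_comm] using h r
    · rcases eq_or_ne t r with rfl | htr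
      · exact hxy
      · simpa [Equiv.swap_apply_of_ne_of_ne htr ht, Function.update_of_ne htr] using h t
  · rintro ⟨hx, hy, hxy'⟩ t
    rcases eq_or_ne t r with rfl | htr
    · simp [Function.update_of_ne hr, hy]
    rcases eq_or_ne t r' with rfl | htr'
    · simp [Function.update_of_ne hr, hx]
    · simp [Equiv.swap_apply_of_ne_of_ne htr htr', Function.update_of_ne htr, hxy' t htr']

lemma swapOp_update_apply_eq_zero {a b r : Fin N} (ha : a ≠ r) (hb : b ≠ r) {j k : Fin d}
    (hkj : k ≠ j) (x y : Fin N → Fin d) :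
    (swapOp a b (Function.update x r j) (Function.update y r k) : ℂ) = 0 := by
  rw [swapOp, if_neg]
  intro h
  have := congrFun h r
  simp [Equiv.swap_apply_of_ne_of_ne ha.symm hb.symm] at this
  exact hkj this.symm

lemma sum_embed_single_mul_swapOp_mul_embed_single {a b : Fin N} (hab : a ≠ b) (r : Fin N)
    {j k : Fin d} (hkj : k ≠ j) :
    ∑ i : Fin d, embed r (single i j (1 : ℂ)) * swapOp a b * embed r (single k i 1) =
      (if a = r then embed b (single k j 1) else 0) +
        (if b = r then embed a (single k j 1) else 0) := by
  ext x y
  rw [sum_embed_single_mul_mul_embed_single_apply]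
  by_cases hxy : x r = y r
  · rw [if_pos hxy]
    rcases eq_or_ne a r with rfl | ha
    · simp [hab.symm, swapOp_update_apply_of_ne hab.symm j k hxy]
    rcases eq_or_ne b r with rfl | hb
    · simp [ha, swapOp_comm a b, swapOp_update_apply_of_ne hab j k hxy]
    · simp [ha, hb, swapOp_update_apply_eq_zero ha hb hkj]
  · rw [if_neg hxy]
    split_ifs with ha hb hb
    · exact absurd (ha.trans hb.symm) hab
    · subst ha; simp [embed_single_apply_eq_zero_of_ne hab.symm _ _ hxy]
    · subst hb; simp [embed_single_apply_eq_zero_of_ne hab _ _ hxy]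
    · simp

end MatrixUnits

lemma Fin.sum_ite_castSucc_eq {M : Type*} [AddCommMonoid M] {n : ℕ} (r : Fin (n + 1))
    (g : Fin n → M) :
    ∑ s : Fin n, (if s.castSucc = r then g s else 0) =
      if h : (r : ℕ) < n then g ⟨r, h⟩ else 0 := by
  induction r using Fin.lastCases with
  | last => simp [Fin.castSucc_ne_last]
  | cast r => simp [Fin.castSucc_inj]

lemma Fin.sum_ite_succ_eq {M : Type*} [AddCommMonoid M] {n : ℕ} (r : Fin (n + 1))
    (g : Fin n → M) :
    ∑ s : Fin n, (if s.succ = r then g s else 0) =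
      if h : 0 < (r : ℕ) then g ⟨r - 1, by omega⟩ else 0 := by
  induction r using Fin.cases with
  | zero => simp [Fin.succ_ne_zero]
  | succ r => simp [Fin.succ_inj]

/-- For the chain permutation Hamiltonian `H_P = Σ_s P_{s,s+1}` on `n+1`
sites and matrix units `E_{ab}^{(r)}` embedded at site `r`, one has, for `k ≠ j`,
`Σ_i E_{ij}^{(r)} H_P E_{ki}^{(r)} = E_{kj}^{(r+1)} + E_{kj}^{(r-1)}`, where the term at
`r+1` (resp. `r-1`) is omitted when `r` is the last (resp. first) site. -/
theorem matrix_unit_recursion (n d : ℕ) (r : Fin (n+1)) (j k : Fin d) (hkj : k ≠ j) :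
    (∑ i : Fin d,
        embed r (Matrix.single i j (1 : ℂ)) *
          (∑ s : Fin n, swapOp s.castSucc s.succ) *
            embed r (Matrix.single k i (1 : ℂ)))
      =
    (if h : (r : ℕ) < n then
        embed (⟨(r : ℕ) + 1, by omega⟩ : Fin (n+1)) (Matrix.single k j (1 : ℂ))
      else 0)
    + (if h : 0 < (r : ℕ) then
        embed (⟨(r : ℕ) - 1, by omega⟩ : Fin (n+1)) (Matrix.single k j (1 : ℂ))
      else 0) := by
  calc _ = ∑ s : Fin n, ∑ i : Fin d, embed r (single i j (1 : ℂ)) *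
          swapOp s.castSucc s.succ * embed r (single k i 1) := by
        simp only [Finset.mul_sum, Finset.sum_mul]
        exact Finset.sum_comm
    _ = ∑ s : Fin n, ((if s.castSucc = r then embed s.succ (single k j (1 : ℂ)) else 0) +
          (if s.succ = r then embed s.castSucc (single k j 1) else 0)) :=
        Finset.sum_congr rfl fun s _ =>
          sum_embed_single_mul_swapOp_mul_embed_single (Fin.castSucc_lt_succ (i := s)).ne r hkj
    _ = _ := by
        rw [Finset.sum_add_distrib, Fin.sum_ite_castSucc_eq, Fin.sum_ite_succ_eq]
        rfl

end
end
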